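/- arXiv:1302.7300 — 3 statements merged into one kernel-verified Lean document; each statement's English description precedes it below -/
import Mathlib

section
/- For every integer r ≥ 1 and every complex number s with Re(s) > 1, the Dirichlet series of the divisor function of order r satisfies ∑_{n=1}^∞ τ^(r)(n)/n^s = ζ(s)·ζ((r+1)s)/ζ((2r+2)s), where ζ is the Riemann zeta function. -/
open Filter

/-- The divisor function of order `r`: `τ^(r)(n) = 2^{#{p prime : p^(r+1) ∣ n}}`. -/
def tauOrd (r n : ℕ) : ℕ :=
  2 ^ (n.primeFactors.filter (fun p => p ^ (r + 1) ∣ n)).card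

/-!
Counting squarefree `m` with `m ^ (r+1) ∣ n` by their sets of prime factors gives
`τ^(r) = 1 ⋆ g`, where `g (m ^ (r+1)) = 1` for squarefree `m` and `g` vanishes off the
`(r+1)`-th powers. Hence `∑ τ^(r)(n) n^(-s) = ζ(s) · ∑ μ(m)² m^(-(r+1)s)`, and the squarefree
indicator has Dirichlet series `ζ(w) / ζ(2w)` because it equals `∑_{m² ∣ n} μ(m)`.
-/

open Finset ArithmeticFunction LSeries
open scoped LSeries.notation ArithmeticFunction.Moebius

lemma Nat.card_divisors_filter_pow_dvd_squarefree {k n : ℕ} (hk : k ≠ 0) (hn : n ≠ 0) :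
    #{m ∈ n.divisors | m ^ k ∣ n ∧ Squarefree m} = 2 ^ #{p ∈ n.primeFactors | p ^ k ∣ n} := by
  have hprimes : ∀ T ∈ {p ∈ n.primeFactors | p ^ k ∣ n}.powerset, ∀ p ∈ T,
      p.Prime ∧ p ^ k ∣ n := fun T hT p hp =>
    (mem_filter.1 (mem_powerset.1 hT hp)).imp_left Nat.prime_of_mem_primeFactors
  rw [← card_powerset]
  symm
  refine card_bij' (fun T _ => ∏ p ∈ T, p) (fun m _ => m.primeFactors) ?_ ?_ ?_ ?_
  · intro T hT
    have hcop : ∀ p ∈ T, ∀ q ∈ T, p ≠ q → ∀ i j : ℕ, IsRelPrime (p ^ i) (q ^ j) :=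
      fun p hp q hq hpq i j => Nat.coprime_iff_isRelPrime.mp
        (((Nat.coprime_primes (hprimes T hT p hp).1 (hprimes T hT q hq).1).2 hpq).pow i j)
    have hpow : (∏ p ∈ T, p) ^ k ∣ n := by
      rw [← prod_pow]
      exact prod_dvd_of_isRelPrime (fun p hp q hq hpq => hcop p hp q hq hpq k k)
        fun p hp => (hprimes T hT p hp).2
    refine mem_filter.2 ⟨Nat.mem_divisors.2 ⟨(dvd_pow_self _ hk).trans hpow, hn⟩, hpow, ?_⟩
    exact squarefree_prod_of_pairwise_isCoprime
      (fun p hp q hq hpq => by simpa using hcop p hp q hq hpq 1 1)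
      fun p hp => (hprimes T hT p hp).1.prime.squarefree
  · intro m hm
    obtain ⟨-, hmn, -⟩ := mem_filter.1 hm
    refine mem_powerset.2 fun p hp => ?_
    obtain ⟨hp, hpm, -⟩ := Nat.mem_primeFactors.1 hp
    have hpk : p ^ k ∣ n := (pow_dvd_pow_of_dvd hpm k).trans hmn
    exact mem_filter.2 ⟨Nat.mem_primeFactors.2 ⟨hp, (dvd_pow_self p hk).trans hpk, hn⟩, hpk⟩
  · intro T hT
    exact Nat.primeFactors_prod fun p hp => (hprimes T hT p hp).1
  · intro m hm
    exact Nat.prod_primeFactors_of_squarefree (mem_filter.1 hm).2.2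

lemma Nat.dvd_of_sq_dvd_sq_mul_squarefree {a b m : ℕ} (ha : Squarefree a)
    (h : m ^ 2 ∣ b ^ 2 * a) : m ∣ b := by
  rcases eq_or_ne b 0 with rfl | hb
  · exact dvd_zero m
  have hba : b ^ 2 * a ≠ 0 := mul_ne_zero (pow_ne_zero 2 hb) ha.ne_zero
  have hm : m ≠ 0 := by rintro rfl; simp_all
  rw [← Nat.factorization_le_iff_dvd hm hb]
  intro p
  have hp := (Nat.factorization_le_iff_dvd (pow_ne_zero 2 hm) hba).2 h p
  simp only [Nat.factorization_mul (pow_ne_zero 2 hb) ha.ne_zero, Nat.factorization_pow,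
    Finsupp.add_apply, Finsupp.smul_apply, smul_eq_mul] at hp
  have := ha.natFactorization_le_one p
  omega

lemma sum_sq_dvd_moebius {n : ℕ} (hn : n ≠ 0) :
    ∑ m ∈ n.divisors with m ^ 2 ∣ n, μ m = if Squarefree n then 1 else 0 := by
  obtain ⟨a, b, rfl, ha⟩ := Nat.sq_mul_squarefree n
  have hb : b ≠ 0 := by rintro rfl; simp at hn
  have hdiv : {m ∈ (b ^ 2 * a).divisors | m ^ 2 ∣ b ^ 2 * a} = b.divisors := by
    ext m
    simp only [mem_filter, Nat.mem_divisors]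
    refine ⟨fun h => ⟨Nat.dvd_of_sq_dvd_sq_mul_squarefree ha h.2, hb⟩, fun h => ?_⟩
    have hsq : m ^ 2 ∣ b ^ 2 * a := (pow_dvd_pow_of_dvd h.1 2).trans (dvd_mul_right _ _)
    exact ⟨⟨(dvd_pow_self m two_ne_zero).trans hsq, hn⟩, hsq⟩
  have hsqfree : Squarefree (b ^ 2 * a) ↔ b = 1 := by
    refine ⟨fun h => Nat.isUnit_iff.1 (h b ⟨a, by ring⟩), ?_⟩
    rintro rfl
    simpa using ha
  rw [hdiv, ← coe_mul_zeta_apply, moebius_mul_coe_zeta, one_apply]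
  exact if_congr hsqfree.symm rfl rfl

noncomputable def extendPow {R : Type*} [Zero R] (k : ℕ) (f : ℕ → R) : ℕ → R :=
  Function.extend (· ^ k) f 0

section extendPow

variable {R : Type*} {k : ℕ}

lemma extendPow_pow [Zero R] (hk : k ≠ 0) (f : ℕ → R) (m : ℕ) :
    extendPow k f (m ^ k) = f m :=
  (Nat.pow_left_injective hk).extend_apply f 0 m

lemma extendPow_of_notMem_range [Zero R] (f : ℕ → R) {d : ℕ} (hd : d ∉ Set.range (· ^ k)) :
    extendPow k f d = 0 :=
  Function.extend_apply' f (0 : ℕ → R) d hd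

lemma sum_divisors_extendPow [AddCommMonoid R] (hk : k ≠ 0) (f : ℕ → R) (n : ℕ) :
    ∑ d ∈ n.divisors, extendPow k f d = ∑ m ∈ n.divisors with m ^ k ∣ n, f m := by
  have hinj : Set.InjOn (· ^ k) (n.divisors.filter (· ^ k ∣ n) : Set ℕ) :=
    (Nat.pow_left_injective hk).injOn
  rw [← sum_subset (s₁ := (n.divisors.filter (· ^ k ∣ n)).image (· ^ k)), sum_image hinj]
  · simp only [extendPow_pow hk]
  · simp only [subset_iff, mem_image, mem_filter, Nat.mem_divisors]
    rintro _ ⟨m, ⟨⟨-, hn⟩, hmn⟩, rfl⟩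
    exact ⟨hmn, hn⟩
  · simp only [mem_image, mem_filter, Nat.mem_divisors, not_exists, not_and]
    rintro d ⟨hd, hn⟩ hnot
    refine extendPow_of_notMem_range f ?_
    rintro ⟨m, rfl⟩
    exact hnot m ⟨⟨(dvd_pow_self m hk).trans hd, hn⟩, hd⟩ rfl

lemma LSeriesHasSum_extendPow_iff (hk : k ≠ 0) {f : ℕ → ℂ} {s a : ℂ} :
    LSeriesHasSum (extendPow k f) s a ↔ LSeriesHasSum f (k * s) a := by
  rw [LSeriesHasSum, LSeriesHasSum, ← (Nat.pow_left_injective hk).hasSum_iff]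
  · refine Iff.of_eq (congrArg (HasSum · a) (funext fun m => ?_))
    rcases eq_or_ne m 0 with rfl | hm
    · simp [zero_pow hk]
    · simp [term_of_ne_zero hm, term_of_ne_zero (pow_ne_zero k hm), extendPow_pow hk,
        Complex.natCast_cpow_natCast_mul]
  · intro d hd
    rcases eq_or_ne d 0 with rfl | hd0
    · exact term_zero _ _
    · rw [term_of_ne_zero hd0, extendPow_of_notMem_range f hd, zero_div]

end extendPow

lemma Complex.one_lt_re_natCast_mul {k : ℕ} (hk : k ≠ 0) {s : ℂ} (hs : 1 < s.re) :
    1 < ((k : ℂ) * s).re := by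
  have hk1 : (1 : ℝ) ≤ k := by exact_mod_cast Nat.one_le_iff_ne_zero.2 hk
  simp only [Complex.mul_re, Complex.natCast_re, Complex.natCast_im, zero_mul, sub_zero]
  nlinarith

lemma LSeries.one_convolution_apply {R : Type*} [Semiring R] (f : ℕ → R) (n : ℕ) :
    ((1 : ℕ → R) ⍟ f) n = ∑ d ∈ n.divisors, f d := by
  simp [convolution_def, Nat.sum_divisorsAntidiagonal' (f := fun _ b => f b)]

lemma squarefree_indicator_eq_one_convolution {n : ℕ} (hn : n ≠ 0) :
    (if Squarefree n then 1 else 0 : ℂ) = ((1 : ℕ → ℂ) ⍟ extendPow 2 ↗μ) n := by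
  rw [one_convolution_apply, sum_divisors_extendPow two_ne_zero]
  exact_mod_cast (congrArg (Int.cast : ℤ → ℂ) (sum_sq_dvd_moebius hn)).symm

lemma LSeries_squarefree_indicator {w : ℂ} (hw : 1 < w.re) :
    L (fun n => if Squarefree n then 1 else 0) w = riemannZeta w / riemannZeta (2 * w) := by
  have h2w : 1 < (2 * w).re := by exact_mod_cast Complex.one_lt_re_natCast_mul two_ne_zero hw
  have hμ := (LSeriesHasSum_extendPow_iff two_ne_zero).2
    (LSeriesSummable_moebius_iff.2 (by exact_mod_cast h2w)).LSeriesHasSum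
  rw [LSeries_congr (fun hn => squarefree_indicator_eq_one_convolution hn),
    LSeries_convolution' (LSeriesSummable_one_iff.2 hw) hμ.LSeriesSummable, hμ.LSeries_eq,
    LSeries_one_eq_riemannZeta hw, div_eq_mul_inv]
  congr 1
  refine eq_inv_of_mul_eq_one_right ?_
  rw [← LSeries_one_eq_riemannZeta h2w]
  exact_mod_cast LSeries_one_mul_Lseries_moebius h2w

lemma tauOrd_eq_one_convolution (r : ℕ) {n : ℕ} (hn : n ≠ 0) :
    (tauOrd r n : ℂ) =
      ((1 : ℕ → ℂ) ⍟ extendPow (r + 1) (fun m => if Squarefree m then 1 else 0)) n := by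
  rw [one_convolution_apply, sum_divisors_extendPow r.succ_ne_zero, sum_boole, filter_filter,
    Nat.card_divisors_filter_pow_dvd_squarefree r.succ_ne_zero hn, tauOrd]

theorem stmt_0_general (r : ℕ) (s : ℂ) (hs : 1 < s.re) :
    ∑' n : ℕ, (tauOrd r n : ℂ) / (n : ℂ) ^ s =
      riemannZeta s * riemannZeta (((r : ℂ) + 1) * s) /
        riemannZeta ((2 * (r : ℂ) + 2) * s) := by
  have hs0 : s ≠ 0 := by rintro rfl; norm_num at hs
  have hrs := Complex.one_lt_re_natCast_mul r.succ_ne_zero hs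
  have hg := (LSeriesHasSum_extendPow_iff r.succ_ne_zero).2
    (LSeriesSummable_of_bounded_of_one_lt_re (m := 1)
      (f := fun m => if Squarefree m then 1 else 0) (fun n _ => by split_ifs <;> simp)
      hrs).LSeriesHasSum
  calc ∑' n : ℕ, (tauOrd r n : ℂ) / (n : ℂ) ^ s = L (fun n => (tauOrd r n : ℂ)) s := by
        simp only [LSeries, term_of_ne_zero' hs0]
    _ = riemannZeta s * L (fun m => if Squarefree m then 1 else 0) (((r + 1 : ℕ) : ℂ) * s) := by
        rw [LSeries_congr (fun hn => tauOrd_eq_one_convolution r hn),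
          LSeries_convolution' (LSeriesSummable_one_iff.2 hs) hg.LSeriesSummable, hg.LSeries_eq,
          LSeries_one_eq_riemannZeta hs]
    _ = _ := by
        rw [LSeries_squarefree_indicator hrs, mul_div_assoc]
        push_cast
        ring_nf

theorem stmt_0 (r : ℕ) (hr : 1 ≤ r) (s : ℂ) (hs : 1 < s.re) :
    ∑' n : ℕ, (tauOrd r n : ℂ) / (n : ℂ) ^ s =
      riemannZeta s * riemannZeta (((r : ℂ) + 1) * s) /
        riemannZeta ((2 * (r : ℂ) + 2) * s) :=
  stmt_0_general r s hs
end

section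
/- For every integer r ≥ 1 and every integer n ≥ 1, τ^(r)(n) = ∑ μ(m), where the sum runs over all triples (k, l, m) of positive integers with k · l^(r+1) · m^(2r+2) = n, and μ is the Möbius function. (In other words, τ^(r) is the Dirichlet convolution of n ↦ τ(1,r+1;n) with μ_{2r+2}.) -/
open Filter

/-!
Writing `d = l * m ^ 2`, the triples `(k, l, m)` with `k * l ^ (r+1) * m ^ (2r+2) = n` correspond to
pairs `(d, m)` with `d ^ (r+1) ∣ n` and `m ^ 2 ∣ d`. For fixed `d = b ^ 2 * a` with `a` squarefree,
`m ^ 2 ∣ d` iff `m ∣ b`, so the inner sum `∑ μ m` is `1` exactly when `b = 1`, i.e. when `d` is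
squarefree. What remains counts the squarefree `d` with `d ^ (r+1) ∣ n`; these are the products of
subsets of the primes `p` with `p ^ (r+1) ∣ n`.
-/

open Finset ArithmeticFunction ArithmeticFunction.Moebius

namespace Nat

theorem sq_dvd_sq_mul_iff_dvd {a b m : ℕ} (ha : Squarefree a) : m ^ 2 ∣ b ^ 2 * a ↔ m ∣ b := by
  refine ⟨fun h => ?_, fun h => (pow_dvd_pow_of_dvd h 2).trans (dvd_mul_right _ _)⟩
  rcases eq_or_ne b 0 with rfl | hb
  · exact dvd_zero m
  have hba : b ^ 2 * a ≠ 0 := mul_ne_zero (pow_ne_zero 2 hb) ha.ne_zero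
  have hm : m ≠ 0 := by rintro rfl; exact hba (zero_dvd_iff.mp (by simpa using h))
  rw [← factorization_le_iff_dvd hm hb]
  intro p
  have hp := (factorization_le_iff_dvd (pow_ne_zero 2 hm) hba).2 h p
  simp only [factorization_mul (pow_ne_zero 2 hb) ha.ne_zero, factorization_pow,
    Finsupp.add_apply, Finsupp.smul_apply, smul_eq_mul] at hp
  have := ha.natFactorization_le_one p
  omega

theorem sum_moebius_filter_sq_dvd {d : ℕ} (hd : d ≠ 0) :
    ∑ m ∈ d.divisors with m ^ 2 ∣ d, μ m = if Squarefree d then 1 else 0 := by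
  obtain ⟨a, b, rfl, ha⟩ := sq_mul_squarefree d
  have hb : b ≠ 0 := by rintro rfl; simp at hd
  have hdiv : {m ∈ (b ^ 2 * a).divisors | m ^ 2 ∣ b ^ 2 * a} = b.divisors := by
    ext m
    simp only [mem_filter, mem_divisors, sq_dvd_sq_mul_iff_dvd ha]
    exact ⟨fun h => ⟨h.2, hb⟩,
      fun h => ⟨⟨h.1.trans ((dvd_pow_self b two_ne_zero).trans (dvd_mul_right _ _)), hd⟩, h.1⟩⟩
  rw [hdiv, ← coe_mul_zeta_apply, moebius_mul_coe_zeta, one_apply]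
  refine if_congr ⟨?_, fun h => Nat.isUnit_iff.mp (h b ⟨a, by ring⟩)⟩ rfl rfl
  rintro rfl
  simpa using ha

theorem squarefree_prod_of_prime {s : Finset ℕ} (hs : ∀ p ∈ s, p.Prime) :
    Squarefree (∏ p ∈ s, p) :=
  squarefree_prod_of_pairwise_isCoprime
    (fun p hp q hq hpq =>
      coprime_iff_isRelPrime.mp ((coprime_primes (hs p hp) (hs q hq)).mpr hpq))
    fun p hp => (hs p hp).squarefree

theorem _root_.Squarefree.pow_dvd_iff_forall_primeFactors {d n k : ℕ} (hd : Squarefree d) :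
    d ^ k ∣ n ↔ ∀ p ∈ d.primeFactors, p ^ k ∣ n := by
  refine ⟨fun h p hp => (pow_dvd_pow_of_dvd (dvd_of_mem_primeFactors hp) k).trans h, fun h => ?_⟩
  rw [← prod_primeFactors_of_squarefree hd, ← prod_pow]
  refine prod_dvd_of_isRelPrime (fun p hp q hq hpq => ?_) h
  exact coprime_iff_isRelPrime.mp (Coprime.pow k k
    ((coprime_primes (prime_of_mem_primeFactors hp) (prime_of_mem_primeFactors hq)).mpr hpq))

theorem card_filter_pow_dvd_squarefree {n : ℕ} (hn : n ≠ 0) (k : ℕ) :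
    #{d ∈ n.divisors | d ^ k ∣ n ∧ Squarefree d} = 2 ^ #{p ∈ n.primeFactors | p ^ k ∣ n} := by
  rw [← card_powerset]
  refine card_nbij' primeFactors (fun s => ∏ p ∈ s, p) (fun d hd => ?_) (fun s hs => ?_)
    (fun d hd => ?_) (fun s hs => ?_)
  · simp only [coe_filter, mem_divisors, Set.mem_ofPred_eq] at hd
    obtain ⟨⟨hdn, -⟩, hdk, hsq⟩ := hd
    rw [mem_coe, mem_powerset]
    intro p hp
    exact mem_filter.mpr
      ⟨primeFactors_mono hdn hn hp, hsq.pow_dvd_iff_forall_primeFactors.mp hdk p hp⟩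
  · rw [mem_coe, mem_powerset, subset_iff] at hs
    have hprime : ∀ p ∈ s, p.Prime := fun p hp =>
      prime_of_mem_primeFactors (mem_filter.mp (hs hp)).1
    have hsq := squarefree_prod_of_prime hprime
    have hfac : (∏ p ∈ s, p).primeFactors = s := primeFactors_prod hprime
    simp only [coe_filter, mem_divisors, Set.mem_ofPred_eq]
    refine ⟨⟨?_, hn⟩, hsq.pow_dvd_iff_forall_primeFactors.mpr fun p hp => ?_, hsq⟩
    · rw [← prod_primeFactors_of_squarefree hsq, prod_primeFactors_dvd_iff hn, hfac]
      exact fun p hp => (mem_filter.mp (hs hp)).1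
    · rw [hfac] at hp
      exact (mem_filter.mp (hs hp)).2
  · exact prod_primeFactors_of_squarefree (mem_filter.mp hd).2.2
  · exact primeFactors_prod fun p hp =>
      prime_of_mem_primeFactors (mem_filter.mp (mem_powerset.mp hs hp)).1

theorem mem_filter_triples_iff {n e : ℕ} (hn : n ≠ 0) (he : e ≠ 0) {t : ℕ × ℕ × ℕ} :
    t ∈ {t ∈ Icc 1 n ×ˢ Icc 1 n ×ˢ Icc 1 n | t.1 * t.2.1 ^ e * t.2.2 ^ (2 * e) = n} ↔
      t.1 * t.2.1 ^ e * t.2.2 ^ (2 * e) = n := by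
  obtain ⟨k, l, m⟩ := t
  refine ⟨fun h => (mem_filter.mp h).2, fun h => mem_filter.mpr ⟨?_, h⟩⟩
  have hpos : 0 < n := pos_of_ne_zero hn
  have hk : k ∣ n := ⟨l ^ e * m ^ (2 * e), by rw [← h]; ring⟩
  have hl : l ^ e ∣ n := ⟨k * m ^ (2 * e), by rw [← h]; ring⟩
  have hm : m ^ (2 * e) ∣ n := Dvd.intro_left _ h
  simp only [mem_product, mem_Icc, one_le_iff_ne_zero]
  refine ⟨⟨ne_zero_of_dvd_ne_zero hn hk, le_of_dvd hpos hk⟩,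
    ⟨?_, (le_self_pow he l).trans (le_of_dvd hpos hl)⟩,
    ⟨?_, (le_self_pow (by omega) m).trans (le_of_dvd hpos hm)⟩⟩
  · exact fun hl0 => hn (by simpa [hl0, he] using hl)
  · exact fun hm0 => hn (by simpa [hm0, he] using hm)

theorem sum_filter_triples_eq_sum_sum_sq_dvd {M : Type*} [AddCommMonoid M] (f : ℕ → M) {n e : ℕ}
    (hn : n ≠ 0) (he : e ≠ 0) :
    ∑ t ∈ {t ∈ Icc 1 n ×ˢ Icc 1 n ×ˢ Icc 1 n | t.1 * t.2.1 ^ e * t.2.2 ^ (2 * e) = n}, f t.2.2 =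
      ∑ d ∈ n.divisors with d ^ e ∣ n, ∑ m ∈ d.divisors with m ^ 2 ∣ d, f m := by
  rw [sum_sigma']
  refine sum_nbij' (fun t => ⟨t.2.1 * t.2.2 ^ 2, t.2.2⟩)
    (fun x => (n / x.1 ^ e, x.1 / x.2 ^ 2, x.2)) ?_ ?_ ?_ ?_ fun _ _ => rfl
  · rintro ⟨k, l, m⟩ ht
    rw [mem_filter_triples_iff hn he] at ht
    have hdn : (l * m ^ 2) ^ e ∣ n := ⟨k, by rw [← ht]; ring⟩
    have hd0 : l * m ^ 2 ≠ 0 := fun h => hn (by simpa [h, he] using hdn)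
    simp only [mem_sigma, mem_filter, mem_divisors]
    exact ⟨⟨⟨(dvd_pow_self _ he).trans hdn, hn⟩, hdn⟩,
      ⟨(dvd_pow_self m two_ne_zero).trans (dvd_mul_left _ _), hd0⟩, dvd_mul_left _ _⟩
  · rintro ⟨d, m⟩ hx
    simp only [mem_sigma, mem_filter, mem_divisors] at hx
    obtain ⟨⟨-, hdn⟩, -, hmd⟩ := hx
    rw [mem_filter_triples_iff hn he]
    calc n / d ^ e * (d / m ^ 2) ^ e * m ^ (2 * e) = n / d ^ e * (d / m ^ 2 * m ^ 2) ^ e := by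
          ring
      _ = n := by rw [Nat.div_mul_cancel hmd, Nat.div_mul_cancel hdn]
  · rintro ⟨k, l, m⟩ ht
    rw [mem_filter_triples_iff hn he] at ht
    have hkd : k * (l * m ^ 2) ^ e = n := by rw [← ht]; ring
    have hd : (l * m ^ 2) ^ e ≠ 0 := right_ne_zero_of_mul (by rwa [hkd])
    simp only [Prod.mk.injEq, and_true]
    refine ⟨?_, Nat.mul_div_cancel l (pos_of_ne_zero (right_ne_zero_of_mul (ne_zero_pow he hd)))⟩
    rw [← hkd, Nat.mul_div_cancel k (pos_of_ne_zero hd)]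
  · rintro ⟨d, m⟩ hx
    simp only [mem_sigma, mem_filter] at hx
    simp only [Nat.div_mul_cancel hx.2.2]

end Nat

theorem stmt_1_general (r : ℕ) (n : ℕ) (hn : 1 ≤ n) :
    (tauOrd r n : ℤ) =
      ∑ t ∈ (Finset.Icc 1 n ×ˢ Finset.Icc 1 n ×ˢ Finset.Icc 1 n).filter
        (fun t : ℕ × ℕ × ℕ => t.1 * t.2.1 ^ (r + 1) * t.2.2 ^ (2 * r + 2) = n),
        ArithmeticFunction.moebius t.2.2 := by
  have hn0 : n ≠ 0 := Nat.one_le_iff_ne_zero.mp hn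
  rw [show 2 * r + 2 = 2 * (r + 1) by ring,
    Nat.sum_filter_triples_eq_sum_sum_sq_dvd _ hn0 r.succ_ne_zero,
    sum_congr rfl fun d hd =>
      Nat.sum_moebius_filter_sq_dvd (Nat.pos_of_mem_divisors (mem_filter.mp hd).1).ne',
    sum_boole, filter_filter, Nat.card_filter_pow_dvd_squarefree hn0, tauOrd]

theorem stmt_1 (r : ℕ) (hr : 1 ≤ r) (n : ℕ) (hn : 1 ≤ n) :
    (tauOrd r n : ℤ) =
      ∑ t ∈ (Finset.Icc 1 n ×ˢ Finset.Icc 1 n ×ˢ Finset.Icc 1 n).filter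
        (fun t : ℕ × ℕ × ℕ => t.1 * t.2.1 ^ (r + 1) * t.2.2 ^ (2 * r + 2) = n),
        ArithmeticFunction.moebius t.2.2 :=
  stmt_1_general r n hn
end

section
/- For every integer r ≥ 1 and every complex s with Re(s) > 2, ∑_{n=1}^∞ z_r(n)/n^s = ζ(s−1)·ζ((r+1)s−r)/ζ((r+2)s−r−1), where z_r(n) = ∑ a·b^r·c^{r+1}·μ(c), the sum running over all triples (a,b,c) of positive integers with a·b^{r+1}·c^{r+2} = n, μ is the Möbius function, and ζ is the Riemann zeta function. -/
/-!
The triple sum defining `z_r(n) n^{-s}` is the fibre over `n` of the product of the three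
absolutely convergent series `∑ a·a^{-s}`, `∑ b^r·b^{-(r+1)s}` and `∑ μ(c)·c^{r+1}·c^{-(r+2)s}`,
fibred along `(a, b, c) ↦ a·b^{r+1}·c^{r+2}`. Summing over the fibres therefore gives the product
`ζ(s-1) · ζ((r+1)s-r) · ζ((r+2)s-r-1)⁻¹`.
-/

open Filter

/-- `z_r(n) = ∑_{a·b^{r+1}·c^{r+2} = n} a·b^r·c^{r+1}·μ(c)`. -/
def zfun (r n : ℕ) : ℤ :=
  ∑ t ∈ (Finset.Icc 1 n ×ˢ Finset.Icc 1 n ×ˢ Finset.Icc 1 n).filter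
      (fun t : ℕ × ℕ × ℕ => t.1 * t.2.1 ^ (r + 1) * t.2.2 ^ (r + 2) = n),
    (t.1 : ℤ) * (t.2.1 : ℤ) ^ r * (t.2.2 : ℤ) ^ (r + 1) * ArithmeticFunction.moebius t.2.2

open ArithmeticFunction LSeries
open scoped ArithmeticFunction.Moebius LSeries.notation

theorem hasSum_mul_mul_of_summable_norm {ι ι' ι'' R : Type*} [NormedRing R] [CompleteSpace R]
    {f : ι → R} {g : ι' → R} {h : ι'' → R} (hf : Summable fun x => ‖f x‖)
    (hg : Summable fun y => ‖g y‖) (hh : Summable fun z => ‖h z‖) :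
    HasSum (fun t : ι × ι' × ι'' => f t.1 * (g t.2.1 * h t.2.2))
      ((∑' x, f x) * ((∑' y, g y) * ∑' z, h z)) := by
  have hgh : Summable fun p : ι' × ι'' => ‖g p.1 * h p.2‖ := hg.mul_norm hh
  rw [tsum_mul_tsum_of_summable_norm hg hh, tsum_mul_tsum_of_summable_norm hf hgh]
  exact (summable_mul_of_summable_norm hf hgh).hasSum

lemma LSeries_moebius_eq_inv_riemannZeta {s : ℂ} (hs : 1 < s.re) :
    L ↗μ s = (riemannZeta s)⁻¹ := by
  rw [← LSeries_one_eq_riemannZeta hs]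
  exact eq_inv_of_mul_eq_one_right (LSeries_one_mul_Lseries_moebius hs)

lemma Complex.natCast_cpow_natCast_mul_sub {n : ℕ} (hn : n ≠ 0) (m k : ℕ) (s : ℂ) :
    (n : ℂ) ^ (m * s - k) = ((n : ℂ) ^ s) ^ m / (n : ℂ) ^ k := by
  rw [Complex.cpow_sub _ _ (Nat.cast_ne_zero.2 hn), Complex.cpow_nat_mul, Complex.cpow_natCast]

lemma Complex.natCast_pow_cpow (n m : ℕ) (s : ℂ) :
    ((n : ℂ) ^ m) ^ s = ((n : ℂ) ^ s) ^ m := by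
  rw [← Complex.natCast_cpow_natCast_mul, Complex.cpow_nat_mul]

def tripleWeight (r : ℕ) (t : ℕ × ℕ × ℕ) : ℕ := t.1 * t.2.1 ^ (r + 1) * t.2.2 ^ (r + 2)

noncomputable def tripleTerm (r : ℕ) (s : ℂ) (t : ℕ × ℕ × ℕ) : ℂ :=
  term 1 (s - 1) t.1 * (term 1 ((r + 1) * s - r) t.2.1 * term ↗μ ((r + 2) * s - r - 1) t.2.2)

lemma tripleTerm_eq (r : ℕ) {s : ℂ} (hs : s ≠ 0) (t : ℕ × ℕ × ℕ) :
    tripleTerm r s t =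
      (t.1 * t.2.1 ^ r * t.2.2 ^ (r + 1) * μ t.2.2 : ℂ) / (tripleWeight r t : ℂ) ^ s := by
  obtain ⟨a, b, c⟩ := t
  -- A zero coordinate kills both sides: `term f s 0 = 0`, and `0 ^ s = 0` as `s ≠ 0`.
  rcases eq_or_ne a 0 with rfl | ha
  · simp [tripleTerm, tripleWeight, Complex.zero_cpow hs]
  rcases eq_or_ne b 0 with rfl | hb
  · simp [tripleTerm, tripleWeight, Complex.zero_cpow hs]
  rcases eq_or_ne c 0 with rfl | hc
  · simp [tripleTerm, tripleWeight, Complex.zero_cpow hs]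
  have ha' : (a : ℂ) ^ s ≠ 0 := by simp [Complex.cpow_eq_zero_iff, ha]
  have hb' : (b : ℂ) ^ s ≠ 0 := by simp [Complex.cpow_eq_zero_iff, hb]
  have hc' : (c : ℂ) ^ s ≠ 0 := by simp [Complex.cpow_eq_zero_iff, hc]
  have e₁ : s - 1 = ((1 : ℕ) : ℂ) * s - (1 : ℕ) := by push_cast; ring
  have e₂ : ((r : ℂ) + 1) * s - r = ((r + 1 : ℕ) : ℂ) * s - (r : ℕ) := by push_cast; ring
  have e₃ : ((r : ℂ) + 2) * s - r - 1 = ((r + 2 : ℕ) : ℂ) * s - (r + 1 : ℕ) := by push_cast; ring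
  rw [tripleTerm, tripleWeight, term_of_ne_zero ha, term_of_ne_zero hb, term_of_ne_zero hc, e₁, e₂,
    e₃, Complex.natCast_cpow_natCast_mul_sub ha, Complex.natCast_cpow_natCast_mul_sub hb,
    Complex.natCast_cpow_natCast_mul_sub hc, Nat.cast_mul, Complex.natCast_mul_natCast_cpow,
    Nat.cast_mul, Complex.natCast_mul_natCast_cpow, Nat.cast_pow, Nat.cast_pow,
    Complex.natCast_pow_cpow, Complex.natCast_pow_cpow]
  simp only [Pi.one_apply]
  field_simp

lemma coe_filter_eq_tripleWeight_preimage (r : ℕ) {n : ℕ} (hn : n ≠ 0) :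
    (((Finset.Icc 1 n ×ˢ Finset.Icc 1 n ×ˢ Finset.Icc 1 n).filter
        fun t : ℕ × ℕ × ℕ => tripleWeight r t = n : Finset (ℕ × ℕ × ℕ)) : Set (ℕ × ℕ × ℕ)) =
      tripleWeight r ⁻¹' {n} := by
  have mem_Icc {d : ℕ} (hd : d ∣ n) : d ∈ Finset.Icc 1 n :=
    Finset.mem_Icc.2 ⟨Nat.pos_of_dvd_of_pos hd (Nat.pos_of_ne_zero hn), Nat.le_of_dvd
      (Nat.pos_of_ne_zero hn) hd⟩
  ext ⟨a, b, c⟩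
  simp only [Finset.coe_filter, Finset.mem_product, Set.mem_ofPred_eq, Set.mem_preimage,
    Set.mem_singleton_iff]
  refine ⟨And.right, fun h => ⟨⟨mem_Icc ?_, mem_Icc ?_, mem_Icc ?_⟩, h⟩⟩ <;> rw [← h, tripleWeight]
  · exact (dvd_mul_right a _).mul_right _
  · exact ((dvd_pow_self b r.succ_ne_zero).mul_left a).mul_right _
  · exact (dvd_pow_self c (r + 1).succ_ne_zero).mul_left _

lemma zfun_div_cpow_eq_tsum_tripleTerm (r : ℕ) {s : ℂ} (hs : s ≠ 0) (n : ℕ) :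
    (zfun r n : ℂ) / (n : ℂ) ^ s = ∑' t : tripleWeight r ⁻¹' {n}, tripleTerm r s t := by
  rcases eq_or_ne n 0 with rfl | hn
  · have hzero (t : tripleWeight r ⁻¹' {0}) : tripleTerm r s t = 0 := by
      rw [tripleTerm_eq r hs, show tripleWeight r t = 0 from t.2, Nat.cast_zero,
        Complex.zero_cpow hs, div_zero]
    simp [hzero, Complex.zero_cpow hs]
  rw [← coe_filter_eq_tripleWeight_preimage r hn, Finset.tsum_subtype', zfun]
  push_cast
  rw [Finset.sum_div]
  exact Finset.sum_congr rfl fun t ht => by rw [tripleTerm_eq r hs, (Finset.mem_filter.1 ht).2]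

theorem stmt_10_general (r : ℕ) (s : ℂ) (hs : 2 < s.re) :
    ∑' n : ℕ, (zfun r n : ℂ) / (n : ℂ) ^ s =
      riemannZeta (s - 1) * riemannZeta (((r : ℂ) + 1) * s - r) /
        riemannZeta (((r : ℂ) + 2) * s - (r : ℂ) - 1) := by
  have hs₀ : s ≠ 0 := by rintro rfl; norm_num at hs
  have h₁ : 1 < (s - 1).re := by rw [Complex.sub_re, Complex.one_re]; linarith
  have h₂ : 1 < (((r : ℂ) + 1) * s - r).re := by
    simp only [Complex.sub_re, Complex.mul_re, Complex.add_re, Complex.natCast_re,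
      Complex.one_re, Complex.add_im, Complex.natCast_im, Complex.one_im, add_zero, zero_mul,
      sub_zero]
    nlinarith
  have h₃ : 1 < (((r : ℂ) + 2) * s - r - 1).re := by
    simp only [Complex.sub_re, Complex.mul_re, Complex.add_re, Complex.natCast_re,
      Complex.re_ofNat, Complex.add_im, Complex.natCast_im, Complex.im_ofNat, add_zero, zero_mul,
      sub_zero, Complex.one_re]
    nlinarith
  have hsum : HasSum (tripleTerm r s)
      (L 1 (s - 1) * (L 1 (((r : ℂ) + 1) * s - r) * L ↗μ (((r : ℂ) + 2) * s - r - 1))) :=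
    hasSum_mul_mul_of_summable_norm (summable_norm_iff.2 (LSeriesSummable_one_iff.2 h₁))
      (summable_norm_iff.2 (LSeriesSummable_one_iff.2 h₂))
      (summable_norm_iff.2 (LSeriesSummable_moebius_iff.2 h₃))
  rw [tsum_congr (zfun_div_cpow_eq_tsum_tripleTerm r hs₀), (hsum.tsum_fiberwise _).tsum_eq,
    LSeries_one_eq_riemannZeta h₁, LSeries_one_eq_riemannZeta h₂,
    LSeries_moebius_eq_inv_riemannZeta h₃, ← mul_assoc, div_eq_mul_inv]

theorem stmt_10 (r : ℕ) (hr : 1 ≤ r) (s : ℂ) (hs : 2 < s.re) :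
    ∑' n : ℕ, (zfun r n : ℂ) / (n : ℂ) ^ s =
      riemannZeta (s - 1) * riemannZeta (((r : ℂ) + 1) * s - r) /
        riemannZeta (((r : ℂ) + 2) * s - (r : ℂ) - 1) :=
  stmt_10_general r s hs
end
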